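/- Let 𝒯 = (T_ω)_{ω∈Ω} be a random dynamical system on a tight separable metric space X over a probability measure preserving system (Ω, B(Ω), ℙ, θ), with skew product S(ω,x) = (θ(ω), T_ω(x)) and invariant measure μ (i.e. μ is S-invariant and π_*μ = ℙ), with marginal ν = ∫ μ_ω dℙ on X, and let k ≥ 2 be an integer. If D̲_k(ν) > 0, then for μ^k-almost every (ω_1,x_1,…,ω_k,x_k) ∈ (Ω×X)^k, limsup_{n→∞} log m_n^{ω_1,…,ω_k}(x_1,…,x_k) / (−log n) ≤ k / ((k−1)·D̲_k(ν)). -/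

import Mathlib

open MeasureTheory Filter Set Metric Topology

noncomputable section

/-- The distance `d(y_1,...,y_k) = max_{i ≠ j} d(y_i, y_j)` between `k` points. -/
noncomputable def pairMax {X : Type*} [PseudoMetricSpace X] {k : ℕ} (y : Fin k → X) : ℝ :=
  ⨆ p : {q : Fin k × Fin k // q.1 ≠ q.2}, dist (y p.1.1) (y p.1.2)

/-- The random iteration `T_ω^n = T_{θ^{n-1}ω} ∘ ⋯ ∘ T_{θω} ∘ T_ω`. -/
def randomIter {Ω X : Type*} (θ : Ω → Ω) (T : Ω → X → X) : ℕ → Ω → X → X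
  | 0, _, x => x
  | n + 1, ω, x => randomIter θ T n (θ ω) (T ω x)

/-- The shortest distance between `k` random orbits up to time `n`. -/
noncomputable def mRandom {Ω X : Type*} [PseudoMetricSpace X] (θ : Ω → Ω) (T : Ω → X → X)
    {k : ℕ} (p : Fin k → Ω × X) (n : ℕ) : ℝ :=
  ⨅ i : Fin k → Fin n, pairMax fun j => randomIter θ T (i j : ℕ) (p j).1 (p j).2

/-- The lower generalized fractal dimension of `μ`. -/
noncomputable def lowerD {X : Type*} [PseudoMetricSpace X] [MeasurableSpace X]
    (μ : Measure X) (k : ℕ) : ℝ :=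
  liminf
    (fun r : ℝ =>
      Real.log (∫ x, (μ (ball x r)).toReal ^ (k - 1) ∂μ) / (((k : ℝ) - 1) * Real.log r))
    (nhdsWithin 0 (Set.Ioi 0))

/-- The upper generalized fractal dimension of `μ`. -/
noncomputable def upperD {X : Type*} [PseudoMetricSpace X] [MeasurableSpace X]
    (μ : Measure X) (k : ℕ) : ℝ :=
  limsup
    (fun r : ℝ =>
      Real.log (∫ x, (μ (ball x r)).toReal ^ (k - 1) ∂μ) / (((k : ℝ) - 1) * Real.log r))
    (nhdsWithin 0 (Set.Ioi 0))

/-- A metric space is tight if there are `r₀ > 0` and `N₀` such that every ball of radius `2r`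
(`0 < r < r₀`) can be covered by at most `N₀` balls of radius `r`. -/
def TightSpace (X : Type*) [PseudoMetricSpace X] : Prop :=
  ∃ (r₀ : ℝ) (N₀ : ℕ), 0 < r₀ ∧ ∀ r : ℝ, 0 < r → r < r₀ → ∀ x : X,
    ∃ s : Finset X, s.card ≤ N₀ ∧ ball x (2 * r) ⊆ ⋃ y ∈ s, ball y r

/-! If the `k` orbits come within `r` of each other before time `n`, then for some times
`i₁, …, i_k < n` the points `T_{ω_j}^{i_j} x_j` all lie in the `r`-ball around the first one. As
`(ω, x) ↦ T_ω^i x` pushes `μ` forward to `ν`, each of these `n^k` events has `μ^k`-measure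
`∫ ν(B(x, r))^(k-1) dν`, which is at most `r^(s(k-1))` for `s < D̲_k(ν)` and small `r`. Along
`n = 2^(l+1)`, `r = 2^(-cl)` with `c > k / ((k-1) D̲_k(ν))` these bounds decay geometrically in `l`,
so by Borel–Cantelli eventually `m_{2^(l+1)} ≥ 2^(-cl)`; since `m_n` decreases in `n`, this gives
`m_n ≥ n^(-c)` for all large `n`. -/

open scoped ENNReal

lemma le_rpow_of_le_log_div_log {x r s : ℝ} (hr₀ : 0 < r) (hr₁ : r < 1)
    (h : s ≤ Real.log x / Real.log r) : x ≤ r ^ s := by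
  rcases le_or_gt x 0 with hx | hx
  · exact hx.trans (Real.rpow_pos_of_pos hr₀ s).le
  rw [le_div_iff_of_neg (Real.log_neg hr₀ hr₁), ← Real.log_rpow hr₀] at h
  exact (Real.log_le_log_iff hx (Real.rpow_pos_of_pos hr₀ s)).1 h

lemma two_pow_mul_rpow_eq (k l : ℕ) (c a : ℝ) :
    ((2 : ℝ) ^ (l + 1)) ^ k * (((2 : ℝ) ^ l) ^ (-c)) ^ a =
      2 ^ k * ((2 : ℝ) ^ (k - c * a)) ^ l := by
  simp only [← Real.rpow_natCast, ← Real.rpow_mul (zero_le_two : (0 : ℝ) ≤ 2),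
    ← Real.rpow_add (zero_lt_two : (0 : ℝ) < 2)]
  push_cast
  ring_nf

lemma eventually_rpow_neg_le_of_dyadic {u : ℕ → ℝ} (hu : AntitoneOn u (Ici 1)) {c : ℝ}
    (hc : 0 ≤ c) (h : ∀ᶠ l in atTop, ((2 : ℝ) ^ l) ^ (-c) ≤ u (2 ^ (l + 1))) :
    ∀ᶠ n : ℕ in atTop, (n : ℝ) ^ (-c) ≤ u n := by
  obtain ⟨L, hL⟩ := eventually_atTop.1 h
  filter_upwards [eventually_ge_atTop (2 ^ L)] with n hn
  have hn₀ : n ≠ 0 := (Nat.pos_of_ne_zero (pow_ne_zero L two_ne_zero)).trans_le hn |>.ne'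
  set l := Nat.log 2 n
  have hl : 2 ^ l ≤ n := Nat.pow_log_le_self 2 hn₀
  calc (n : ℝ) ^ (-c) ≤ ((2 : ℝ) ^ l) ^ (-c) :=
        Real.rpow_le_rpow_of_nonpos (by positivity) (by exact_mod_cast hl) (neg_nonpos.2 hc)
    _ ≤ u (2 ^ (l + 1)) := hL l (Nat.le_log_of_pow_le one_lt_two hn)
    _ ≤ u n := hu (mem_Ici.2 (Nat.one_le_iff_ne_zero.2 hn₀)) (mem_Ici.2 Nat.one_le_two_pow)
        (Nat.lt_pow_succ_log_self one_lt_two n).le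

lemma limsup_log_div_neg_log_le {u : ℕ → ℝ} {B c : ℝ} (hB : ∀ᶠ n in atTop, u n ≤ B)
    (hc : ∀ᶠ n : ℕ in atTop, (n : ℝ) ^ (-c) ≤ u n) :
    limsup (fun n : ℕ => Real.log (u n) / -Real.log n) atTop ≤ c := by
  have hlog : ∀ᶠ n : ℕ in atTop, 1 ≤ Real.log n := by
    filter_upwards [eventually_ge_atTop 3] with n hn
    rw [Real.le_log_iff_exp_le (by positivity)]
    calc Real.exp 1 ≤ 3 := (Real.exp_one_lt_d9.trans_le (by norm_num)).le
      _ ≤ n := by exact_mod_cast hn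
  have hpos : ∀ᶠ n : ℕ in atTop, 0 < u n := by
    filter_upwards [hc, eventually_ge_atTop 1] with n hn hn₁
    exact (Real.rpow_pos_of_pos (by exact_mod_cast hn₁) _).trans_le hn
  set A := Real.log (max B 1)
  have hlower : ∀ᶠ n in atTop, -A ≤ Real.log (u n) / -Real.log n := by
    filter_upwards [hB, hlog, hpos] with n hnB hn hun
    rw [le_div_iff_of_neg (by linarith)]
    have hA : 0 ≤ A := Real.log_nonneg (le_max_right B 1)
    calc Real.log (u n) ≤ A := Real.log_le_log hun (hnB.trans (le_max_left B 1))
      _ ≤ A * Real.log n := le_mul_of_one_le_right hA hn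
      _ = -A * -Real.log n := by ring
  have hupper : ∀ᶠ n in atTop, Real.log (u n) / -Real.log n ≤ c := by
    filter_upwards [hc, hlog, eventually_ge_atTop 1] with n hnc hn hn₁
    have hn₀ : (0 : ℝ) < n := by exact_mod_cast hn₁
    rw [div_le_iff_of_neg (by linarith), mul_neg, ← neg_mul, ← Real.log_rpow hn₀]
    exact Real.log_le_log (Real.rpow_pos_of_pos hn₀ _) hnc
  exact limsup_le_of_le (isBoundedUnder_of_eventually_ge hlower).isCoboundedUnder_le hupper

lemma ae_le_of_forall_lt_ae_le {α : Type*} [MeasurableSpace α] {μ : Measure α}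
    {f : α → ℝ} {K : ℝ} (h : ∀ c, K < c → ∀ᵐ x ∂μ, f x ≤ c) : ∀ᵐ x ∂μ, f x ≤ K := by
  obtain ⟨c, -, hcK, hc⟩ := exists_seq_strictAnti_tendsto K
  filter_upwards [ae_all_iff.2 fun n => h (c n) (hcK n)] with x hx
  exact ge_of_tendsto' hc hx

lemma ae_eventually_notMem_of_eventually_le_geometric {α : Type*} [MeasurableSpace α]
    {μ : Measure α} {s : ℕ → Set α} {C w : ℝ≥0∞} (hC : C ≠ ∞) (hw : w < 1)
    (h : ∀ᶠ l in atTop, μ (s l) ≤ C * w ^ l) : ∀ᵐ x ∂μ, ∀ᶠ l in atTop, x ∉ s l := by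
  obtain ⟨L, hL⟩ := eventually_atTop.1 h
  have hsum : ∑' l, μ (s (l + L)) ≠ ∞ := by
    apply LT.lt.ne
    calc ∑' l, μ (s (l + L)) ≤ ∑' l, C * w ^ L * w ^ l :=
          ENNReal.tsum_le_tsum fun l => (hL _ le_add_self).trans_eq (by ring)
      _ = C * w ^ L * (1 - w)⁻¹ := by rw [ENNReal.tsum_mul_left, ENNReal.tsum_geometric]
      _ < ∞ := ENNReal.mul_lt_top (ENNReal.mul_lt_top hC.lt_top
          (ENNReal.pow_lt_top (hw.trans ENNReal.one_lt_top)))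
          (ENNReal.inv_lt_top.2 (tsub_pos_of_lt hw))
  filter_upwards [ae_eventually_notMem hsum] with x hx
  rw [← map_add_atTop_eq_nat L]
  exact hx

section Orbits

variable {Ω X : Type*} (θ : Ω → Ω) (T : Ω → X → X)

def skewProduct (q : Ω × X) : Ω × X := (θ q.1, T q.1 q.2)

lemma iterate_skewProduct (n : ℕ) (q : Ω × X) :
    (skewProduct θ T)^[n] q = (θ^[n] q.1, randomIter θ T n q.1 q.2) := by
  induction n generalizing q with
  | zero => rfl
  | succ n ih => rw [Function.iterate_succ_apply, ih]; rfl

lemma measurePreserving_randomIter [MeasurableSpace Ω] [MeasurableSpace X] {μ : Measure (Ω × X)}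
    (hS : MeasurePreserving (skewProduct θ T) μ μ) (n : ℕ) :
    MeasurePreserving (fun q : Ω × X => randomIter θ T n q.1 q.2) μ (μ.map Prod.snd) := by
  have h := (MeasurePreserving.mk measurable_snd rfl : MeasurePreserving Prod.snd μ _).comp
    (hS.iterate n)
  convert h using 1
  funext q
  simp [iterate_skewProduct]

end Orbits

section ShortestDistance

variable {X : Type*} [PseudoMetricSpace X] {k : ℕ}

lemma pairMax_nonneg (y : Fin k → X) : 0 ≤ pairMax y :=
  Real.iSup_nonneg fun _ => dist_nonneg

lemma dist_le_pairMax (y : Fin k → X) {a b : Fin k} (hab : a ≠ b) :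
    dist (y a) (y b) ≤ pairMax y :=
  le_ciSup (f := fun p : {q : Fin k × Fin k // q.1 ≠ q.2} => dist (y p.1.1) (y p.1.2))
    (Set.finite_range _).bddAbove ⟨(a, b), hab⟩

variable {Ω : Type*} (θ : Ω → Ω) (T : Ω → X → X)

lemma mRandom_antitoneOn (p : Fin k → Ω × X) : AntitoneOn (mRandom θ T p) (Ici 1) := by
  intro n hn n' _ hnn'
  have : NeZero n := ⟨Nat.one_le_iff_ne_zero.1 hn⟩
  refine le_ciInf fun i => ?_
  have hbdd : BddBelow (range fun i : Fin k → Fin n' =>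
      pairMax fun j => randomIter θ T (i j : ℕ) (p j).1 (p j).2) :=
    ⟨0, by rintro _ ⟨i, rfl⟩; exact pairMax_nonneg _⟩
  exact ciInf_le hbdd fun j => Fin.castLE hnn' (i j)

lemma setOf_mRandom_lt_subset [NeZero k] {n : ℕ} (hn : n ≠ 0) (r : ℝ) :
    {p : Fin k → Ω × X | mRandom θ T p n < r} ⊆
      ⋃ i : Fin k → Fin n, (fun p j => randomIter θ T (i j : ℕ) (p j).1 (p j).2) ⁻¹'
        {y | ∀ j, y j ∈ ball (y 0) r} := by
  have : NeZero n := ⟨hn⟩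
  intro p hp
  obtain ⟨i, hi⟩ := exists_lt_of_ciInf_lt (show mRandom θ T p n < r from hp)
  refine mem_iUnion.2 ⟨i, fun j => ?_⟩
  rcases eq_or_ne j 0 with rfl | hj
  · exact mem_ball_self ((pairMax_nonneg _).trans_lt hi)
  · exact (dist_le_pairMax _ hj).trans_lt hi

end ShortestDistance

section CorrelationIntegral

variable {X : Type*} [PseudoMetricSpace X] [MeasurableSpace X]

def correlationIntegral (ν : Measure X) (k : ℕ) (r : ℝ) : ℝ≥0∞ :=
  ∫⁻ x, ν (ball x r) ^ (k - 1) ∂ν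

lemma correlationIntegral_le_one (ν : Measure X) [IsProbabilityMeasure ν] (k : ℕ) (r : ℝ) :
    correlationIntegral ν k r ≤ 1 :=
  (lintegral_mono fun _ => pow_le_one' prob_le_one _).trans_eq (by simp)

variable [SecondCountableTopology X] [OpensMeasurableSpace X]

lemma measurable_measure_ball (ν : Measure X) [SFinite ν] (r : ℝ) :
    Measurable fun x => ν (ball x r) :=
  measurable_measure_prodMk_left (ν := ν)
    (measurableSet_lt (continuous_snd.dist continuous_fst).measurable measurable_const)

lemma correlationIntegral_toReal (ν : Measure X) [IsProbabilityMeasure ν] (k : ℕ) (r : ℝ) :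
    (correlationIntegral ν k r).toReal = ∫ x, (ν (ball x r)).toReal ^ (k - 1) ∂ν := by
  rw [correlationIntegral, ← integral_toReal
    ((measurable_measure_ball ν r).pow_const _).aemeasurable
    (ae_of_all _ fun _ => ENNReal.pow_lt_top (measure_lt_top _ _))]
  simp only [ENNReal.toReal_pow]

lemma measure_pi_forall_mem_ball (ν : Measure X) [SigmaFinite ν] {k : ℕ} [NeZero k] {r : ℝ}
    (hr : 0 < r) :
    Measure.pi (fun _ : Fin k => ν) {y | ∀ j, y j ∈ ball (y 0) r} =
      correlationIntegral ν k r := by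
  obtain ⟨k, rfl⟩ := Nat.exists_eq_add_one_of_ne_zero (NeZero.ne k)
  set D : Set (X × (Fin k → X)) := {q | ∀ j, q.2 j ∈ ball q.1 r}
  have hD : MeasurableSet D := by
    simp only [D, ofPred_forall]
    exact MeasurableSet.iInter fun j => measurableSet_lt
      (((continuous_apply j).comp continuous_snd).dist continuous_fst).measurable measurable_const
  have hpre : {y : Fin (k + 1) → X | ∀ j, y j ∈ ball (y 0) r} =
      MeasurableEquiv.piFinSuccAbove (fun _ => X) 0 ⁻¹' D := by
    ext y
    simp only [D, mem_preimage, MeasurableEquiv.piFinSuccAbove_apply, Fin.forall_iff_succAbove 0]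
    exact and_iff_right (mem_ball_self hr)
  rw [hpre, (measurePreserving_piFinSuccAbove (fun _ => ν) 0).measure_preimage
    hD.nullMeasurableSet, Measure.prod_apply hD, correlationIntegral]
  refine lintegral_congr fun x => ?_
  have hslice : Prod.mk x ⁻¹' D = univ.pi fun _ => ball x r := by ext; simp [D]
  simp [hslice, Measure.pi_pi]

lemma eventually_correlationIntegral_le_rpow (ν : Measure X) [IsProbabilityMeasure ν] {k : ℕ}
    (hk : 1 < k) (hD : 0 < lowerD ν k) {s : ℝ} (hs : s < lowerD ν k) :
    ∀ᶠ r in 𝓝[>] 0, correlationIntegral ν k r ≤ ENNReal.ofReal (r ^ (s * (k - 1))) := by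
  have hk₁ : (0 : ℝ) < k - 1 := by
    rw [sub_pos]; exact_mod_cast hk
  -- a real `liminf` of a function unbounded below is `0`, which `hD` excludes
  have hbdd : IsBoundedUnder (· ≥ ·) (𝓝[>] 0) fun r : ℝ =>
      Real.log (∫ x, (ν (ball x r)).toReal ^ (k - 1) ∂ν) / ((k - 1) * Real.log r) := by
    by_contra h
    rw [lowerD, Real.liminf_of_not_isBoundedUnder h] at hD
    exact hD.false
  filter_upwards [eventually_lt_of_lt_liminf hs hbdd, Ioo_mem_nhdsGT one_pos] with r hsr hr
  rw [← ENNReal.ofReal_toReal (ne_top_of_le_ne_top ENNReal.one_ne_top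
    (correlationIntegral_le_one ν k r)), correlationIntegral_toReal]
  refine ENNReal.ofReal_le_ofReal (le_rpow_of_le_log_div_log hr.1 hr.2 ?_)
  rw [div_mul_eq_div_div_swap, lt_div_iff₀ hk₁] at hsr
  exact hsr.le

end CorrelationIntegral

section RandomOrbits

variable {Ω X : Type*} [MeasurableSpace Ω] [PseudoMetricSpace X] [MeasurableSpace X]
  [SecondCountableTopology X] [OpensMeasurableSpace X] {θ : Ω → Ω} {T : Ω → X → X}
  {μ : Measure (Ω × X)} [IsProbabilityMeasure μ]

lemma measure_pi_setOf_mRandom_lt_le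
    (hS : MeasurePreserving (skewProduct θ T) μ μ) {k n : ℕ} [NeZero k] (hn : n ≠ 0) {r : ℝ}
    (hr : 0 < r) :
    Measure.pi (fun _ : Fin k => μ) {p | mRandom θ T p n < r} ≤
      n ^ k * correlationIntegral (μ.map Prod.snd) k r := by
  have : IsProbabilityMeasure (μ.map Prod.snd) :=
    Measure.isProbabilityMeasure_map measurable_snd.aemeasurable
  have hC : MeasurableSet {y : Fin k → X | ∀ j, y j ∈ ball (y 0) r} := by
    simp only [ofPred_forall]
    exact MeasurableSet.iInter fun j => measurableSet_lt
      ((continuous_apply j).dist (continuous_apply 0)).measurable measurable_const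
  calc _ ≤ ∑ i : Fin k → Fin n, Measure.pi (fun _ : Fin k => μ)
          ((fun p j => randomIter θ T (i j : ℕ) (p j).1 (p j).2) ⁻¹'
            {y | ∀ j, y j ∈ ball (y 0) r}) :=
        (measure_mono (setOf_mRandom_lt_subset θ T hn r)).trans (measure_iUnion_fintype_le _ _)
    _ = ∑ _i : Fin k → Fin n, correlationIntegral (μ.map Prod.snd) k r := by
        refine Finset.sum_congr rfl fun i _ => ?_
        rw [(measurePreserving_pi _ _ fun j =>
          measurePreserving_randomIter θ T hS (i j)).measure_preimage hC.nullMeasurableSet,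
          measure_pi_forall_mem_ball _ hr]
    _ = n ^ k * correlationIntegral (μ.map Prod.snd) k r := by simp

lemma eventually_measure_pi_setOf_mRandom_lt_dyadic_le
    (hS : MeasurePreserving (skewProduct θ T) μ μ) {k : ℕ} (hk : 1 < k)
    (hD : 0 < lowerD (μ.map Prod.snd) k) {s : ℝ} (hs : s < lowerD (μ.map Prod.snd) k) {c : ℝ}
    (hc : 0 < c) :
    ∀ᶠ l in atTop, Measure.pi (fun _ : Fin k => μ)
      {p | mRandom θ T p (2 ^ (l + 1)) < ((2 : ℝ) ^ l) ^ (-c)} ≤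
        ENNReal.ofReal (2 ^ k) * ENNReal.ofReal (2 ^ ((k : ℝ) - c * (s * (k - 1)))) ^ l := by
  have : NeZero k := ⟨by omega⟩
  have : IsProbabilityMeasure (μ.map Prod.snd) :=
    Measure.isProbabilityMeasure_map measurable_snd.aemeasurable
  have hradii : Tendsto (fun l : ℕ => ((2 : ℝ) ^ l) ^ (-c)) atTop (𝓝[>] 0) :=
    tendsto_nhdsWithin_iff.2 ⟨(tendsto_rpow_neg_atTop hc).comp
      (tendsto_pow_atTop_atTop_of_one_lt one_lt_two),
      .of_forall fun _ => Real.rpow_pos_of_pos (by positivity) _⟩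
  filter_upwards [hradii.eventually (eventually_correlationIntegral_le_rpow _ hk hD hs)] with l hl
  calc _ ≤ ((2 ^ (l + 1) : ℕ) : ℝ≥0∞) ^ k *
        correlationIntegral (μ.map Prod.snd) k (((2 : ℝ) ^ l) ^ (-c)) :=
        measure_pi_setOf_mRandom_lt_le hS (pow_ne_zero _ two_ne_zero) (by positivity)
    _ ≤ ((2 ^ (l + 1) : ℕ) : ℝ≥0∞) ^ k *
        ENNReal.ofReal ((((2 : ℝ) ^ l) ^ (-c)) ^ (s * (k - 1))) := by gcongr
    _ = _ := by
        rw [← ENNReal.ofReal_natCast, ← ENNReal.ofReal_pow (by positivity),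
          ← ENNReal.ofReal_pow (by positivity), ← ENNReal.ofReal_mul (by positivity),
          ← ENNReal.ofReal_mul (by positivity), Nat.cast_pow, Nat.cast_ofNat,
          two_pow_mul_rpow_eq]

lemma ae_eventually_rpow_neg_le_mRandom
    (hS : MeasurePreserving (skewProduct θ T) μ μ) {k : ℕ} (hk : 1 < k)
    (hD : 0 < lowerD (μ.map Prod.snd) k) {c : ℝ}
    (hc : k / ((k - 1) * lowerD (μ.map Prod.snd) k) < c) :
    ∀ᵐ p ∂(Measure.pi fun _ : Fin k => μ), ∀ᶠ n : ℕ in atTop,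
      (n : ℝ) ^ (-c) ≤ mRandom θ T p n := by
  have hk₁ : (0 : ℝ) < k - 1 := by
    rw [sub_pos]; exact_mod_cast hk
  have hc₀ : 0 < c := (by positivity : (0 : ℝ) < k / ((k - 1) * lowerD _ k)).trans hc
  obtain ⟨s, hks, hsD⟩ : ∃ s, k / (c * (k - 1)) < s ∧ s < lowerD (μ.map Prod.snd) k := by
    refine exists_between ?_
    rw [div_lt_iff₀ (by positivity)] at hc ⊢
    linarith
  have hw : (2 : ℝ) ^ ((k : ℝ) - c * (s * (k - 1))) < 1 := by
    rw [div_lt_iff₀ (by positivity)] at hks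
    exact Real.rpow_lt_one_of_one_lt_of_neg one_lt_two (by linarith)
  filter_upwards [ae_eventually_notMem_of_eventually_le_geometric ENNReal.ofReal_ne_top
    (ENNReal.ofReal_lt_one.2 hw)
    (eventually_measure_pi_setOf_mRandom_lt_dyadic_le hS hk hD hsD hc₀)] with p hp
  exact eventually_rpow_neg_le_of_dyadic (mRandom_antitoneOn θ T p) hc₀.le
    (hp.mono fun _ hl => not_lt.1 hl)

end RandomOrbits

theorem random_shortest_distance_upper_bound_general
    {Ω X : Type*} [MeasurableSpace Ω]
    [MetricSpace X] [TopologicalSpace.SeparableSpace X] [MeasurableSpace X] [BorelSpace X]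
    (θ : Ω → Ω)
    (T : Ω → X → X)
    (μ : Measure (Ω × X)) [IsProbabilityMeasure μ]
    (hS : MeasurePreserving (fun q : Ω × X => (θ q.1, T q.1 q.2)) μ μ)
    (k : ℕ) (hk : 2 ≤ k)
    (hD : 0 < lowerD (Measure.map Prod.snd μ) k) :
    ∀ᵐ p ∂(Measure.pi fun _ : Fin k => μ),
      limsup (fun n : ℕ => Real.log (mRandom θ T p n) / (-Real.log (n : ℝ))) atTop ≤
        (k : ℝ) / (((k : ℝ) - 1) * lowerD (Measure.map Prod.snd μ) k) := by
  have := UniformSpace.secondCountable_of_separable X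
  refine ae_le_of_forall_lt_ae_le fun c hc => ?_
  filter_upwards [ae_eventually_rpow_neg_le_mRandom hS hk hD hc] with p hp
  have hbdd : ∀ᶠ n in atTop, mRandom θ T p n ≤ mRandom θ T p 1 :=
    eventually_ge_atTop 1 |>.mono fun n hn => mRandom_antitoneOn θ T p (mem_Ici.2 le_rfl) hn hn
  exact limsup_log_div_neg_log_le hbdd hp

theorem random_shortest_distance_upper_bound
    {Ω X : Type*} [MetricSpace Ω] [MeasurableSpace Ω] [BorelSpace Ω]
    [MetricSpace X] [TopologicalSpace.SeparableSpace X] [MeasurableSpace X] [BorelSpace X]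
    (P : Measure Ω) [IsProbabilityMeasure P] (θ : Ω → Ω) (hθ : MeasurePreserving θ P P)
    (T : Ω → X → X) (hTmeas : Measurable fun q : Ω × X => T q.1 q.2)
    (htight : TightSpace X)
    (μ : Measure (Ω × X)) [IsProbabilityMeasure μ]
    (hS : MeasurePreserving (fun q : Ω × X => (θ q.1, T q.1 q.2)) μ μ)
    (hproj : Measure.map Prod.fst μ = P)
    (k : ℕ) (hk : 2 ≤ k)
    (hD : 0 < lowerD (Measure.map Prod.snd μ) k) :
    ∀ᵐ p ∂(Measure.pi fun _ : Fin k => μ),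
      limsup (fun n : ℕ => Real.log (mRandom θ T p n) / (-Real.log (n : ℝ))) atTop ≤
        (k : ℝ) / (((k : ℝ) - 1) * lowerD (Measure.map Prod.snd μ) k) :=
  random_shortest_distance_upper_bound_general θ T μ hS k hk hD
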